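/- arXiv:2506.14800 — 2 statements merged into one kernel-verified Lean document; each statement's English description precedes it below -/
import Mathlib

section
/- In the abstract MMAD setting, assume: c(φ,φ) ≥ 0 for all φ ∈ Φ; ⟨H w, w⟩ ≥ H₀‖w‖² for all w ∈ W with H₀ > 0; ⟨K w, w⟩ ≥ K₀‖w‖² for all w ∈ W with K₀ > 0; ⟨A x, x⟩ ≥ A₀‖x‖² for all x ∈ X with A₀ > 0; and let ε ∈ (0,1) satisfy K₀ + H₀·(1 − 1/ε) > 0. Then for all (φ,g) ∈ Φ × G, B((φ,g),(φ,g)) ≥ M·(‖φ‖² + ‖g‖²), where M = min( H₀·(1 − ε), min( K₀ + H₀·(1 − 1/ε), A₀ ) ) > 0; that is, the MMAD bilinear form B is coercive on Φ × G. -/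
open scoped RealInnerProductSpace

lemma young_sub_sq {W : Type*} [NormedAddCommGroup W] [InnerProductSpace ℝ W]
    (a b : W) {ε : ℝ} (hε : 0 < ε) :
    ‖a - b‖ ^ 2 ≥ (1 - ε) * ‖a‖ ^ 2 + (1 - 1 / ε) * ‖b‖ ^ 2 := by
  have h1 : ‖a - b‖ ^ 2 = ‖a‖ ^ 2 - 2 * ⟪a, b⟫ + ‖b‖ ^ 2 := by
    rw [@norm_sub_sq_real]
  have h2 : ⟪a, b⟫ ≤ ‖a‖ * ‖b‖ := real_inner_le_norm a b
  have h3 := sq_nonneg (ε * ‖a‖ - ‖b‖)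
  have h4 : 1 / ε * ε = 1 := by field_simp
  rw [h1]
  nlinarith [sq_nonneg (‖a‖), sq_nonneg (‖b‖), hε.le]

/-- Coercivity of the abstract MMAD bilinear form
`B((φ,g),(ψ,h)) = c(φ,ψ) + ⟨H(Dφ − jg), Dψ − jh⟩ + ⟨K(jg), jh⟩ + ⟨A(Eg), Eh⟩`:
under the positivity assumptions on `c`, `H`, `K`, `A` and for `ε ∈ (0,1)` with
`K₀ + H₀(1 − 1/ε) > 0`, one has `B((φ,g),(φ,g)) ≥ M(‖φ‖² + ‖g‖²)` with
`M = min(H₀(1 − ε), min(K₀ + H₀(1 − 1/ε), A₀)) > 0`. -/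
theorem mmad_bilinear_form_coercive
    {Φ W X G : Type*}
    [NormedAddCommGroup Φ] [InnerProductSpace ℝ Φ] [CompleteSpace Φ]
    [NormedAddCommGroup W] [InnerProductSpace ℝ W] [CompleteSpace W]
    [NormedAddCommGroup X] [InnerProductSpace ℝ X] [CompleteSpace X]
    [NormedAddCommGroup G] [InnerProductSpace ℝ G] [CompleteSpace G]
    (D : Φ →ₗᵢ[ℝ] W) (j : G →L[ℝ] W) (E : G →L[ℝ] X)
    (hG : ∀ g : G, ‖g‖ ^ 2 = ‖j g‖ ^ 2 + ‖E g‖ ^ 2)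
    (c : Φ →L[ℝ] Φ →L[ℝ] ℝ)
    (H K : W →L[ℝ] W) (A : X →L[ℝ] X)
    (hHsa : IsSelfAdjoint H) (hKsa : IsSelfAdjoint K) (hAsa : IsSelfAdjoint A)
    (H₀ K₀ A₀ ε : ℝ) (hH₀ : 0 < H₀) (hK₀ : 0 < K₀) (hA₀ : 0 < A₀)
    (hc : ∀ φ : Φ, 0 ≤ c φ φ)
    (hH : ∀ w : W, ⟪H w, w⟫ ≥ H₀ * ‖w‖ ^ 2)
    (hK : ∀ w : W, ⟪K w, w⟫ ≥ K₀ * ‖w‖ ^ 2)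
    (hA : ∀ x : X, ⟪A x, x⟫ ≥ A₀ * ‖x‖ ^ 2)
    (hε₀ : 0 < ε) (hε₁ : ε < 1) (hKH : 0 < K₀ + H₀ * (1 - 1 / ε)) :
    0 < min (H₀ * (1 - ε)) (min (K₀ + H₀ * (1 - 1 / ε)) A₀) ∧
    ∀ φ : Φ, ∀ g : G,
      c φ φ + ⟪H (D φ - j g), D φ - j g⟫ + ⟪K (j g), j g⟫ + ⟪A (E g), E g⟫ ≥
        min (H₀ * (1 - ε)) (min (K₀ + H₀ * (1 - 1 / ε)) A₀) * (‖φ‖ ^ 2 + ‖g‖ ^ 2) := by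
  set M := min (H₀ * (1 - ε)) (min (K₀ + H₀ * (1 - 1 / ε)) A₀) with hM
  have hM1 : 0 < H₀ * (1 - ε) := mul_pos hH₀ (by linarith)
  have hMpos : 0 < M := lt_min hM1 (lt_min hKH hA₀)
  refine ⟨hMpos, fun φ g => ?_⟩
  have hMa : M ≤ H₀ * (1 - ε) := min_le_left _ _
  have hMb : M ≤ K₀ + H₀ * (1 - 1 / ε) := le_trans (min_le_right _ _) (min_le_left _ _)
  have hMc : M ≤ A₀ := le_trans (min_le_right _ _) (min_le_right _ _)
  have hD : ‖D φ‖ = ‖φ‖ := D.norm_map φ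
  have hY := young_sub_sq (D φ) (j g) hε₀
  rw [hD] at hY
  have h1 := hH (D φ - j g)
  have h2 := hK (j g)
  have h3 := hA (E g)
  have hcc := hc φ
  have hg := hG g
  have hjg := sq_nonneg ‖j g‖
  have hEg := sq_nonneg ‖E g‖
  have hφ := sq_nonneg ‖φ‖
  have hHsub : ⟪H (D φ - j g), D φ - j g⟫ ≥
      H₀ * (1 - ε) * ‖φ‖ ^ 2 + H₀ * (1 - 1 / ε) * ‖j g‖ ^ 2 := by
    calc ⟪H (D φ - j g), D φ - j g⟫ ≥ H₀ * ‖D φ - j g‖ ^ 2 := h1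
    _ ≥ H₀ * ((1 - ε) * ‖φ‖ ^ 2 + (1 - 1 / ε) * ‖j g‖ ^ 2) := by
        exact mul_le_mul_of_nonneg_left hY hH₀.le
    _ = H₀ * (1 - ε) * ‖φ‖ ^ 2 + H₀ * (1 - 1 / ε) * ‖j g‖ ^ 2 := by ring
  nlinarith [mul_le_mul_of_nonneg_right hMa hφ, mul_le_mul_of_nonneg_right hMb hjg,
    mul_le_mul_of_nonneg_right hMc hEg]
end

section
/- In the abstract MMAD setting, assume the coercivity hypotheses (c(φ,φ) ≥ 0 on Φ; ⟨H w, w⟩ ≥ H₀‖w‖², ⟨K w, w⟩ ≥ K₀‖w‖² on W; ⟨A x, x⟩ ≥ A₀‖x‖² on X with H₀, K₀, A₀ > 0; some ε ∈ (0,1) with K₀ + H₀·(1 − 1/ε) > 0) and the continuity hypothesis (c, H, K, A bounded). Then for every bounded linear functional ℓ on Φ × G there exists a unique (φ,g) ∈ Φ × G such that B((φ,g),(ψ,h)) = ℓ(ψ,h) for all (ψ,h) ∈ Φ × G; that is, the MMAD variational problem is well-posed. -/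
open scoped RealInnerProductSpace

/-!
By Young's inequality `2⟪a, b⟫ ≤ ε‖a‖² + ε⁻¹‖b‖²` and since `D` is an isometry,
`‖Dφ - jg‖² ≥ (1 - ε)‖φ‖² + (1 - 1/ε)‖jg‖²`. Together with `‖g‖² = ‖jg‖² + ‖Eg‖²` this gives
`B((φ,g),(φ,g)) ≥ min (H₀(1 - ε)) (K₀ + H₀(1 - 1/ε)) A₀ · (‖φ‖² + ‖g‖²)`, a positive multiple of
the squared product norm, so Lax–Milgram yields a unique representer of `ℓ`.
-/

theorem IsCoercive.existsUnique_bilin_eq {V : Type*} [NormedAddCommGroup V]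
    [InnerProductSpace ℝ V] [CompleteSpace V] {B : V →L[ℝ] V →L[ℝ] ℝ} (hB : IsCoercive B)
    (ℓ : V →L[ℝ] ℝ) : ∃! v, ∀ w, B v w = ℓ w := by
  let M := hB.continuousLinearEquivOfBilin
  have represents_iff : ∀ v, (∀ w, B v w = ℓ w) ↔ M v = (InnerProductSpace.toDual ℝ V).symm ℓ := by
    intro v
    rw [← (InnerProductSpace.toDual ℝ V).injective.eq_iff, LinearIsometryEquiv.apply_symm_apply,
      ContinuousLinearMap.ext_iff]
    simp [M]
  simp only [represents_iff]
  exact M.bijective.existsUnique _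

theorem existsUnique_bilin_eq_of_coercive_prod {E F : Type*}
    [NormedAddCommGroup E] [InnerProductSpace ℝ E] [CompleteSpace E]
    [NormedAddCommGroup F] [InnerProductSpace ℝ F] [CompleteSpace F]
    (B : E × F →L[ℝ] E × F →L[ℝ] ℝ) {C : ℝ} (hC : 0 < C)
    (hB : ∀ p : E × F, C * (‖p.1‖ ^ 2 + ‖p.2‖ ^ 2) ≤ B p p) (ℓ : E × F →L[ℝ] ℝ) :
    ∃! p, ∀ q, B p q = ℓ q := by
  -- `E × F` carries the sup norm; Lax–Milgram is applied on the Hilbert space `WithLp 2 (E × F)`.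
  let e : WithLp 2 (E × F) ≃L[ℝ] E × F := WithLp.prodContinuousLinearEquiv 2 ℝ E F
  let B₂ := B.bilinearComp e.toContinuousLinearMap e.toContinuousLinearMap
  have hB₂ : IsCoercive B₂ := ⟨C, hC, fun u =>
    calc C * ‖u‖ * ‖u‖ = C * (‖(e u).1‖ ^ 2 + ‖(e u).2‖ ^ 2) := by
          rw [mul_assoc, ← sq, WithLp.prod_norm_sq_eq_of_L2]; rfl
      _ ≤ B₂ u u := hB (e u)⟩
  rw [← e.toEquiv.existsUnique_congr_right]
  simpa only [B₂, ContinuousLinearMap.bilinearComp_apply, ContinuousLinearMap.comp_apply,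
    ContinuousLinearEquiv.coe_coe, ContinuousLinearEquiv.coe_toLinearEquiv,
    LinearEquiv.coe_toEquiv, e.surjective.forall] using
    hB₂.existsUnique_bilin_eq (ℓ ∘L e.toContinuousLinearMap)

theorem weighted_norm_sq_le_norm_sub_sq {W : Type*} [NormedAddCommGroup W]
    [InnerProductSpace ℝ W] (a b : W) {ε : ℝ} (hε : 0 < ε) :
    (1 - ε) * ‖a‖ ^ 2 + (1 - 1 / ε) * ‖b‖ ^ 2 ≤ ‖a - b‖ ^ 2 := by
  have young : 2 * (‖a‖ * ‖b‖) ≤ ε * ‖a‖ ^ 2 + 1 / ε * ‖b‖ ^ 2 := by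
    have : ε * ‖a‖ ^ 2 + 1 / ε * ‖b‖ ^ 2 - 2 * (‖a‖ * ‖b‖) = (ε * ‖a‖ - ‖b‖) ^ 2 / ε := by
      field_simp
      ring
    linarith [show 0 ≤ (ε * ‖a‖ - ‖b‖) ^ 2 / ε by positivity]
  rw [norm_sub_sq_real]
  linarith [real_inner_le_norm a b]

section MMAD

variable {Φ W X G : Type*}
    [NormedAddCommGroup Φ] [InnerProductSpace ℝ Φ]
    [NormedAddCommGroup W] [InnerProductSpace ℝ W]
    [NormedAddCommGroup X] [InnerProductSpace ℝ X]
    [NormedAddCommGroup G] [InnerProductSpace ℝ G]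
    (D : Φ →ₗᵢ[ℝ] W) (j : G →L[ℝ] W) (E : G →L[ℝ] X)
    (c : Φ →L[ℝ] Φ →L[ℝ] ℝ) (H K : W →L[ℝ] W) (A : X →L[ℝ] X)

noncomputable def mmadForm : Φ × G →L[ℝ] Φ × G →L[ℝ] ℝ :=
  let fst := ContinuousLinearMap.fst ℝ Φ G
  let snd := ContinuousLinearMap.snd ℝ Φ G
  let T := D.toContinuousLinearMap ∘L fst - j ∘L snd
  -- over `ℝ` the conjugate-linear `innerSL ℝ` is definitionally bilinear
  let innerW : W →L[ℝ] W →L[ℝ] ℝ := innerSL ℝ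
  let innerX : X →L[ℝ] X →L[ℝ] ℝ := innerSL ℝ
  c.bilinearComp fst fst + innerW.bilinearComp (H ∘L T) T
    + innerW.bilinearComp (K ∘L j ∘L snd) (j ∘L snd)
    + innerX.bilinearComp (A ∘L E ∘L snd) (E ∘L snd)

@[simp]
theorem mmadForm_apply (p q : Φ × G) :
    mmadForm D j E c H K A p q = c p.1 q.1 + ⟪H (D p.1 - j p.2), D q.1 - j q.2⟫
      + ⟪K (j p.2), j q.2⟫ + ⟪A (E p.2), E q.2⟫ :=
  rfl

theorem le_mmadForm_self {H₀ K₀ A₀ ε : ℝ} (hG : ∀ g : G, ‖g‖ ^ 2 = ‖j g‖ ^ 2 + ‖E g‖ ^ 2)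
    (hc : ∀ φ : Φ, 0 ≤ c φ φ) (hH₀ : 0 ≤ H₀)
    (hH : ∀ w : W, ⟪H w, w⟫ ≥ H₀ * ‖w‖ ^ 2)
    (hK : ∀ w : W, ⟪K w, w⟫ ≥ K₀ * ‖w‖ ^ 2)
    (hA : ∀ x : X, ⟪A x, x⟫ ≥ A₀ * ‖x‖ ^ 2) (hε : 0 < ε) (p : Φ × G) :
    min (min (H₀ * (1 - ε)) (K₀ + H₀ * (1 - 1 / ε))) A₀ * (‖p.1‖ ^ 2 + ‖p.2‖ ^ 2)
      ≤ mmadForm D j E c H K A p p := by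
  obtain ⟨φ, g⟩ := p
  set C := min (min (H₀ * (1 - ε)) (K₀ + H₀ * (1 - 1 / ε))) A₀
  have hsub := mul_le_mul_of_nonneg_left (weighted_norm_sq_le_norm_sub_sq (D φ) (j g) hε) hH₀
  rw [D.norm_map] at hsub
  calc C * (‖φ‖ ^ 2 + ‖g‖ ^ 2) = C * ‖φ‖ ^ 2 + C * ‖j g‖ ^ 2 + C * ‖E g‖ ^ 2 := by
        rw [hG]; ring
    _ ≤ H₀ * (1 - ε) * ‖φ‖ ^ 2 + (K₀ + H₀ * (1 - 1 / ε)) * ‖j g‖ ^ 2 + A₀ * ‖E g‖ ^ 2 := by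
        gcongr
        · exact (min_le_left _ _).trans (min_le_left _ _)
        · exact (min_le_left _ _).trans (min_le_right _ _)
        · exact min_le_right _ _
    _ ≤ mmadForm D j E c H K A (φ, g) (φ, g) := by
        rw [mmadForm_apply]
        linarith [hc φ, hH (D φ - j g), hK (j g), hA (E g)]

end MMAD

theorem mmad_variational_problem_well_posed_general
    {Φ W X G : Type*}
    [NormedAddCommGroup Φ] [InnerProductSpace ℝ Φ] [CompleteSpace Φ]
    [NormedAddCommGroup W] [InnerProductSpace ℝ W]
    [NormedAddCommGroup X] [InnerProductSpace ℝ X]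
    [NormedAddCommGroup G] [InnerProductSpace ℝ G] [CompleteSpace G]
    (D : Φ →ₗᵢ[ℝ] W) (j : G →L[ℝ] W) (E : G →L[ℝ] X)
    (hG : ∀ g : G, ‖g‖ ^ 2 = ‖j g‖ ^ 2 + ‖E g‖ ^ 2)
    (c : Φ →L[ℝ] Φ →L[ℝ] ℝ)
    (H K : W →L[ℝ] W) (A : X →L[ℝ] X)
    (H₀ K₀ A₀ ε : ℝ) (hH₀ : 0 < H₀) (hA₀ : 0 < A₀)
    (hc : ∀ φ : Φ, 0 ≤ c φ φ)
    (hH : ∀ w : W, ⟪H w, w⟫ ≥ H₀ * ‖w‖ ^ 2)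
    (hK : ∀ w : W, ⟪K w, w⟫ ≥ K₀ * ‖w‖ ^ 2)
    (hA : ∀ x : X, ⟪A x, x⟫ ≥ A₀ * ‖x‖ ^ 2)
    (hε₀ : 0 < ε) (hε₁ : ε < 1) (hKH : 0 < K₀ + H₀ * (1 - 1 / ε))
    (ℓ : Φ × G →L[ℝ] ℝ) :
    ∃! p : Φ × G, ∀ q : Φ × G,
      c p.1 q.1 + ⟪H (D p.1 - j p.2), D q.1 - j q.2⟫ + ⟪K (j p.2), j q.2⟫ +
        ⟪A (E p.2), E q.2⟫ = ℓ q := by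
  have hC : 0 < min (min (H₀ * (1 - ε)) (K₀ + H₀ * (1 - 1 / ε))) A₀ :=
    lt_min (lt_min (mul_pos hH₀ (sub_pos.2 hε₁)) hKH) hA₀
  simpa only [mmadForm_apply] using existsUnique_bilin_eq_of_coercive_prod _ hC
    (le_mmadForm_self D j E c H K A hG hc hH₀.le hH hK hA hε₀) ℓ

/-- Well-posedness (Lax–Milgram) of the abstract MMAD variational problem: under the
coercivity hypotheses on `c`, `H`, `K`, `A` (with some `ε ∈ (0,1)` such that
`K₀ + H₀(1 − 1/ε) > 0`), for every bounded linear functional `ℓ` on `Φ × G` there is a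
unique `(φ,g) ∈ Φ × G` with `B((φ,g),(ψ,h)) = ℓ(ψ,h)` for all `(ψ,h) ∈ Φ × G`, where
`B((φ,g),(ψ,h)) = c(φ,ψ) + ⟨H(Dφ − jg), Dψ − jh⟩ + ⟨K(jg), jh⟩ + ⟨A(Eg), Eh⟩`. -/
theorem mmad_variational_problem_well_posed
    {Φ W X G : Type*}
    [NormedAddCommGroup Φ] [InnerProductSpace ℝ Φ] [CompleteSpace Φ]
    [NormedAddCommGroup W] [InnerProductSpace ℝ W] [CompleteSpace W]
    [NormedAddCommGroup X] [InnerProductSpace ℝ X] [CompleteSpace X]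
    [NormedAddCommGroup G] [InnerProductSpace ℝ G] [CompleteSpace G]
    (D : Φ →ₗᵢ[ℝ] W) (j : G →L[ℝ] W) (E : G →L[ℝ] X)
    (hG : ∀ g : G, ‖g‖ ^ 2 = ‖j g‖ ^ 2 + ‖E g‖ ^ 2)
    (c : Φ →L[ℝ] Φ →L[ℝ] ℝ)
    (H K : W →L[ℝ] W) (A : X →L[ℝ] X)
    (hHsa : IsSelfAdjoint H) (hKsa : IsSelfAdjoint K) (hAsa : IsSelfAdjoint A)
    (H₀ K₀ A₀ ε : ℝ) (hH₀ : 0 < H₀) (hK₀ : 0 < K₀) (hA₀ : 0 < A₀)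
    (hc : ∀ φ : Φ, 0 ≤ c φ φ)
    (hH : ∀ w : W, ⟪H w, w⟫ ≥ H₀ * ‖w‖ ^ 2)
    (hK : ∀ w : W, ⟪K w, w⟫ ≥ K₀ * ‖w‖ ^ 2)
    (hA : ∀ x : X, ⟪A x, x⟫ ≥ A₀ * ‖x‖ ^ 2)
    (hε₀ : 0 < ε) (hε₁ : ε < 1) (hKH : 0 < K₀ + H₀ * (1 - 1 / ε))
    (ℓ : Φ × G →L[ℝ] ℝ) :
    ∃! p : Φ × G, ∀ q : Φ × G,
      c p.1 q.1 + ⟪H (D p.1 - j p.2), D q.1 - j q.2⟫ + ⟪K (j p.2), j q.2⟫ +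
        ⟪A (E p.2), E q.2⟫ = ℓ q :=
  mmad_variational_problem_well_posed_general D j E hG c H K A H₀ K₀ A₀ ε hH₀ hA₀ hc hH hK hA hε₀
    hε₁ hKH ℓ
end
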